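/- A weak congruence ∼ on a PEA P is a congruence (satisfies condition (C3)) iff it satisfies: (C4') a ∼ b implies a˜ ∼ b˜ and a⁻ ∼ b⁻; and (C5') a ∼ b ⊕ c implies there exist a₁ ∼ b and a₂ ∼ c with a = a₁ ⊕ a₂. -/

import Mathlib

open scoped Classical

/-- A generalized pseudo effect algebra: partial orthosummation modeled via `Option`. -/
structure GPEA (P : Type*) where
  oplus : P → P → Option P
  zero : P
  assoc₁ : ∀ {a b c ab s : P}, oplus a b = some ab → oplus ab c = some s →
    ∃ bc, oplus b c = some bc ∧ oplus a bc = some s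
  assoc₂ : ∀ {a b c bc s : P}, oplus b c = some bc → oplus a bc = some s →
    ∃ ab, oplus a b = some ab ∧ oplus ab c = some s
  conj : ∀ {a b s : P}, oplus a b = some s →
    (∃ c, oplus c a = some s) ∧ (∃ d, oplus b d = some s)
  cancel_right : ∀ {a b c s : P}, oplus a c = some s → oplus b c = some s → a = b
  cancel_left : ∀ {a b c s : P}, oplus c a = some s → oplus c b = some s → a = b
  oplus_zero : ∀ a : P, oplus a zero = some a
  zero_oplus : ∀ a : P, oplus zero a = some a
  pos : ∀ {a b : P}, oplus a b = some zero → a = zero ∧ b = zero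

namespace GPEA

variable {P Q : Type*}

/-- `a ≤ b` iff there is `c` with `a ⊕ c = b`. -/
def le (G : GPEA P) (a b : P) : Prop := ∃ c, G.oplus a c = some b

/-- `a ≤ b` (left version) iff there is `d` with `d ⊕ a = b`. -/
def leL (G : GPEA P) (a b : P) : Prop := ∃ d, G.oplus d a = some b

/-- An ideal: a nonempty, downward closed subset closed under existing orthosums. -/
def IsIdeal (G : GPEA P) (I : Set P) : Prop :=
  I.Nonempty ∧ (∀ a ∈ I, ∀ b : P, G.le b a → b ∈ I) ∧
    (∀ a ∈ I, ∀ b ∈ I, ∀ s : P, G.oplus a b = some s → s ∈ I)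

/-- A normal ideal: `a ⊕ c = c ⊕ b` implies `a ∈ I ↔ b ∈ I`. -/
def IsNormalIdeal (G : GPEA P) (I : Set P) : Prop :=
  G.IsIdeal I ∧ ∀ a b c s : P, G.oplus a c = some s → G.oplus c b = some s → (a ∈ I ↔ b ∈ I)

/-- Condition (R1) for an ideal. -/
def R1 (G : GPEA P) (I : Set P) : Prop :=
  ∀ i ∈ I, ∀ a b s : P, G.oplus a b = some s → G.le i s →
    ∃ j ∈ I, ∃ k ∈ I, G.le j a ∧ G.le k b ∧ ∃ t, G.oplus j k = some t ∧ G.le i t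

/-- Condition (R2) for an ideal. -/
def R2 (G : GPEA P) (I : Set P) : Prop :=
  ∀ i ∈ I, ∀ a : P, G.le i a →
    (∀ b x s : P, G.oplus x i = some a → G.oplus x b = some s →
      ∃ j ∈ I, G.le j b ∧ ∀ c, G.oplus j c = some b → ∃ t, G.oplus a c = some t) ∧
    (∀ b y s : P, G.oplus i y = some a → G.oplus b y = some s →
      ∃ k ∈ I, G.le k b ∧ ∀ z, G.oplus z k = some b → ∃ t, G.oplus z a = some t)

/-- A Riesz ideal is an ideal satisfying (R1) and (R2). -/
def IsRieszIdeal (G : GPEA P) (I : Set P) : Prop := G.IsIdeal I ∧ G.R1 I ∧ G.R2 I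

/-- A normal Riesz ideal. -/
def IsNormalRieszIdeal (G : GPEA P) (I : Set P) : Prop := G.IsNormalIdeal I ∧ G.R1 I ∧ G.R2 I

/-- A GPEA-morphism. -/
def IsMorphism (G : GPEA P) (H : GPEA Q) (φ : P → Q) : Prop :=
  ∀ a b s : P, G.oplus a b = some s → H.oplus (φ a) (φ b) = some (φ s)

/-- A unitizing GPEA-automorphism: a GPEA-automorphism `γ` such that
`γa ⊕ b` is defined iff `b ⊕ a` is defined. -/
def IsUnitizing (G : GPEA P) (γ : P → P) : Prop :=
  Function.Bijective γ ∧ G.IsMorphism G γ ∧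
    (∀ a b : P, (∃ s, G.oplus (γ a) (γ b) = some s) → ∃ t, G.oplus a b = some t) ∧
    (∀ a b : P, (∃ s, G.oplus (γ a) b = some s) ↔ ∃ t, G.oplus b a = some t)

/-- A weak congruence. -/
def IsWeakCong (G : GPEA P) (r : P → P → Prop) : Prop :=
  Equivalence r ∧ ∀ a b a₁ b₁ s s₁ : P, G.oplus a b = some s → G.oplus a₁ b₁ = some s₁ →
    r a a₁ → r b b₁ → r s s₁

/-- Condition (C3): a weak congruence satisfying it is a congruence. -/
def C3 (G : GPEA P) (r : P → P → Prop) : Prop :=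
  ∀ a b s : P, G.oplus a b = some s →
    (∀ a₁, r a a₁ → ∃ b₁, r b b₁ ∧ ∃ t, G.oplus a₁ b₁ = some t) ∧
    (∀ b₂, r b b₂ → ∃ a₂, r a a₂ ∧ ∃ t, G.oplus a₂ b₂ = some t)

/-- Condition (C4). -/
def C4 (G : GPEA P) (r : P → P → Prop) : Prop :=
  ∀ a b a₁ b₁ s t : P, r a b →
    ((G.oplus a a₁ = some s ∧ G.oplus b b₁ = some t ∧ r s t) ∨
      (G.oplus a₁ a = some s ∧ G.oplus b₁ b = some t ∧ r s t)) → r a₁ b₁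

/-- Condition (C5'). -/
def C5' (G : GPEA P) (r : P → P → Prop) : Prop :=
  ∀ a b c s : P, G.oplus b c = some s → r a s →
    ∃ a₁ a₂, r a₁ b ∧ r a₂ c ∧ G.oplus a₁ a₂ = some a

/-- Condition (CR): here `a \ c` is the unique `x` with `x ⊕ c = a`. -/
def CR (G : GPEA P) (r : P → P → Prop) : Prop :=
  ∀ a b : P, r a b → ∃ c d : P,
    G.le c a ∧ G.le a d ∧ G.le c b ∧ G.le b d ∧
    (∀ x, G.oplus x c = some a → r x G.zero) ∧
    (∀ x, G.oplus x c = some b → r x G.zero) ∧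
    (∀ x, G.oplus x a = some d → r x G.zero) ∧
    (∀ x, G.oplus x b = some d → r x G.zero)

/-- A Riesz congruence: a congruence satisfying (C4), (C5') and (CR). -/
def IsRieszCong (G : GPEA P) (r : P → P → Prop) : Prop :=
  G.IsWeakCong r ∧ G.C3 r ∧ G.C4 r ∧ G.C5' r ∧ G.CR r

/-- The relation `∼_I` induced by an ideal `I`: `a ∼_I b` iff there are
`i, j ∈ I` with `i ≤ a`, `j ≤ b` and `a \ i = b \ j`. -/
def simI (G : GPEA P) (I : Set P) (a b : P) : Prop :=
  ∃ i ∈ I, ∃ j ∈ I, ∃ d : P, G.oplus d i = some a ∧ G.oplus d j = some b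

/-- Condition (GCR) for the relation `∼_I`. -/
def GCR (G : GPEA P) (I : Set P) : Prop :=
  ∀ a b : P, G.simI I a b → ∃ i ∈ I, ∃ j ∈ I, ∃ s, G.oplus i a = some s ∧ G.oplus j b = some s

/-- The Riesz decomposition property. -/
def RDP (G : GPEA P) : Prop :=
  ∀ a b c d s : P, G.oplus a b = some s → G.oplus c d = some s →
    ∃ e₁₁ e₁₂ e₂₁ e₂₂ : P, G.oplus e₁₁ e₁₂ = some a ∧ G.oplus e₂₁ e₂₂ = some b ∧
      G.oplus e₁₁ e₂₁ = some c ∧ G.oplus e₁₂ e₂₂ = some d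

end GPEA

/-- A pseudo effect algebra: a GPEA with a largest element `1`. -/
structure PEA (P : Type*) extends GPEA P where
  one : P
  le_one : ∀ a : P, ∃ c, oplus a c = some one
  le_one' : ∀ a : P, ∃ d, oplus d a = some one

namespace PEA

variable {P : Type*}

/-- The right supplement `a˜`: the unique element with `a ⊕ a˜ = 1`. -/
noncomputable def rsup (U : PEA P) (a : P) : P := Classical.choose (U.le_one a)

/-- The left supplement `a⁻`: the unique element with `a⁻ ⊕ a = 1`. -/
noncomputable def lsup (U : PEA P) (a : P) : P := Classical.choose (U.le_one' a)

/-- A state on a PEA. -/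
def IsState (U : PEA P) (s : P → ℝ) : Prop :=
  (∀ a : P, 0 ≤ s a ∧ s a ≤ 1) ∧ s U.one = 1 ∧
    ∀ a b c : P, U.oplus a b = some c → s c = s a + s b

end PEA

/-- `U` is a binary unitization of the GPEA `G` via the embedding `ι`. -/
def IsBinaryUnitization {P Q : Type*} (G : GPEA P) (U : PEA Q) (ι : P → Q) : Prop :=
  Function.Injective ι ∧ ι G.zero = U.toGPEA.zero ∧
    (∀ a b : P, U.oplus (ι a) (ι b) = (G.oplus a b).map ι) ∧
    (∀ a : P, U.one ≠ ι a) ∧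
    (∀ x y : Q, x ∉ Set.range ι → y ∉ Set.range ι → U.oplus x y = none)

/-- The orthosummation of the `γ`-unitization on `P ⊕ P`
(`Sum.inl a` is `a ∈ P`, `Sum.inr b` is `ηb`). -/
noncomputable def uop {P : Type*} (G : GPEA P) (γ : P → P) :
    P ⊕ P → P ⊕ P → Option (P ⊕ P)
  | .inl a, .inl b => (G.oplus a b).map .inl
  | .inl a, .inr b => if h : G.leL a b then some (.inr (Classical.choose h)) else none
  | .inr a, .inl b => if h : G.le (γ b) a then some (.inr (Classical.choose h)) else none
  | .inr _, .inr _ => none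

/-- A PEA-isomorphism. -/
def IsPEAIso {A B : Type*} (U : PEA A) (V : PEA B) (φ : A → B) : Prop :=
  Function.Bijective φ ∧
    (∀ a b s : A, U.oplus a b = some s → V.oplus (φ a) (φ b) = some (φ s)) ∧
    (∀ a b : A, (∃ s, V.oplus (φ a) (φ b) = some s) → ∃ t, U.oplus a b = some t) ∧
    φ U.one = V.one

/-- The coordinatewise orthosummation on `I → P`. -/
noncomputable def piOplus {P : Type*} {I : Type*} (G : GPEA P) (f g : I → P) :
    Option (I → P) :=
  if h : ∀ i, ∃ s, G.oplus (f i) (g i) = some s then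
    some (fun i => Classical.choose (h i)) else none

/-- The extension `∼*` of a relation on `P` to `P ⊕ P`. -/
def rstar {P : Type*} (r : P → P → Prop) : P ⊕ P → P ⊕ P → Prop
  | .inl a, .inl b => r a b
  | .inr a, .inr b => r a b
  | _, _ => False

/-!
Everything goes through the supplements. Under (C3), `a ⊕ a˜ = 1` and `a ∼ b` give `b ⊕ c = t`
with `c ∼ a˜` and `t ∼ 1`; the remainder `d` with `t ⊕ d = 1` is `∼ 0` because `1 ⊕ x` exists
only for `x = 0`, hence `b˜ = c ⊕ d ∼ c ∼ a˜`. For (C5'), given `a ∼ s = b ⊕ c`, (C3) moves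
`c ⊕ s˜` to some `u = c₂ ⊕ a˜` with `c₂ ∼ c`; then `u⁻ ⊕ c₂ = a` and `u⁻ ∼ (c ⊕ s˜)⁻ = b`.
Conversely, to extend `a ⊕ b = s` along `a ∼ a₁`, split `a₁˜ ∼ a˜ = b ⊕ s˜` by (C5'); the piece
`∼ b` fits after `a₁`. The left-hand statements hold in the opposite algebra, where `⊕` is
reversed and the two supplements trade places.
-/

namespace GPEA

variable {P : Type*}

def op (G : GPEA P) : GPEA P where
  oplus a b := G.oplus b a
  zero := G.zero
  assoc₁ h₁ h₂ := G.assoc₂ h₁ h₂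
  assoc₂ h₁ h₂ := G.assoc₁ h₁ h₂
  conj h := (G.conj h).symm
  cancel_right := G.cancel_left
  cancel_left := G.cancel_right
  oplus_zero := G.zero_oplus
  zero_oplus := G.oplus_zero
  pos h := (G.pos h).symm

variable {G : GPEA P} {r : P → P → Prop}

theorem IsWeakCong.op (hw : G.IsWeakCong r) : G.op.IsWeakCong r :=
  ⟨hw.1, fun _ _ _ _ _ _ h h₁ ha hb => hw.2 _ _ _ _ _ _ h h₁ hb ha⟩

theorem C3.op (h3 : G.C3 r) : G.op.C3 r :=
  fun a b s h => ⟨(h3 b a s h).2, (h3 b a s h).1⟩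

theorem C5'.op (h5 : G.C5' r) : G.op.C5' r := fun a b c s h has => by
  obtain ⟨a₁, a₂, ha₁, ha₂, ha⟩ := h5 a c b s h has
  exact ⟨a₂, a₁, ha₂, ha₁, ha⟩

theorem IsWeakCong.rel_of_oplus_of_rel_zero (hw : G.IsWeakCong r) {c d x : P}
    (hx : G.oplus c d = some x) (hd : r d G.zero) : r x c :=
  hw.2 c d c G.zero x c hx (G.oplus_zero c) (hw.1.refl c) hd

end GPEA

namespace PEA

variable {P : Type*} (U : PEA P)

def op : PEA P :=
  { U.toGPEA.op with
    one := U.one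
    le_one := U.le_one'
    le_one' := U.le_one }

theorem op_rsup (a : P) : U.op.rsup a = U.lsup a := rfl

theorem rsup_spec (a : P) : U.oplus a (U.rsup a) = some U.one :=
  Classical.choose_spec (U.le_one a)

theorem lsup_spec (a : P) : U.oplus (U.lsup a) a = some U.one :=
  Classical.choose_spec (U.le_one' a)

variable {U}

theorem eq_rsup {a c : P} (h : U.oplus a c = some U.one) : c = U.rsup a :=
  U.cancel_left h (U.rsup_spec a)

theorem eq_lsup {a c : P} (h : U.oplus c a = some U.one) : c = U.lsup a :=
  U.cancel_right h (U.lsup_spec a)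

theorem eq_zero_of_one_oplus {x w : P} (h : U.oplus U.one x = some w) : x = U.zero := by
  obtain ⟨y, hy⟩ := U.le_one w
  obtain ⟨xy, hxy, hxy1⟩ := U.assoc₁ h hy
  have hxy0 : xy = U.zero := U.cancel_left hxy1 (U.oplus_zero U.one)
  exact (U.pos (hxy0 ▸ hxy)).1

variable {r : P → P → Prop}

theorem rel_zero_of_rel_one_of_oplus (h3 : U.C3 r) {t d : P} (ht : r t U.one)
    (hd : U.oplus t d = some U.one) : r d U.zero := by
  obtain ⟨d₁, hd₁, w, hdw⟩ := (h3 t d U.one hd).1 U.one ht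
  rwa [eq_zero_of_one_oplus hdw] at hd₁

theorem rsup_rel_of_C3 (hw : U.IsWeakCong r) (h3 : U.C3 r) {a b : P} (hab : r a b) :
    r (U.rsup a) (U.rsup b) := by
  obtain ⟨c, hac, t, ht⟩ := (h3 a (U.rsup a) U.one (U.rsup_spec a)).1 b hab
  have ht1 : r t U.one := hw.1.symm (hw.2 _ _ _ _ _ _ (U.rsup_spec a) ht hab hac)
  obtain ⟨d, hd⟩ := U.le_one t
  obtain ⟨cd, hcd, hbcd⟩ := U.assoc₁ ht hd
  have hcdc : r cd c := hw.rel_of_oplus_of_rel_zero hcd (rel_zero_of_rel_one_of_oplus h3 ht1 hd)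
  rw [← eq_rsup hbcd]
  exact hw.1.trans hac (hw.1.symm hcdc)

theorem lsup_rel_of_C3 (hw : U.IsWeakCong r) (h3 : U.C3 r) {a b : P} (hab : r a b) :
    r (U.lsup a) (U.lsup b) := by
  simpa only [op_rsup] using rsup_rel_of_C3 (U := U.op) hw.op h3.op hab

theorem C5'_of_C3 (hw : U.IsWeakCong r) (h3 : U.C3 r) : U.C5' r := by
  intro a b c s hbc has
  obtain ⟨cs, hcs, hbcs⟩ := U.assoc₁ hbc (U.rsup_spec s)
  have has' : r (U.rsup s) (U.rsup a) := hw.1.symm (rsup_rel_of_C3 hw h3 has)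
  obtain ⟨c₂, hcc₂, u, hu⟩ := (h3 c (U.rsup s) cs hcs).2 (U.rsup a) has'
  have hcsu : r cs u := hw.2 _ _ _ _ _ _ hcs hu hcc₂ has'
  have hbu : r b (U.lsup u) := eq_lsup hbcs ▸ lsup_rel_of_C3 hw h3 hcsu
  obtain ⟨v, hv, hva⟩ := U.assoc₂ hu (U.lsup_spec u)
  rw [U.cancel_right hva (U.rsup_spec a)] at hv
  exact ⟨U.lsup u, c₂, hw.1.symm hbu, hw.1.symm hcc₂, hv⟩

theorem exists_rel_oplus_of_C5' (hsymm : ∀ {x y}, r x y → r y x)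
    (hsup : ∀ a b, r a b → r (U.rsup a) (U.rsup b)) (h5 : U.C5' r) {a b s a₁ : P}
    (hab : U.oplus a b = some s) (ha₁ : r a a₁) :
    ∃ b₁, r b b₁ ∧ ∃ t, U.oplus a₁ b₁ = some t := by
  obtain ⟨bs, hbs, habs⟩ := U.assoc₁ hab (U.rsup_spec s)
  have ha₁bs : r (U.rsup a₁) bs := eq_rsup habs ▸ hsymm (hsup a a₁ ha₁)
  obtain ⟨x, _, hxb, -, hxy⟩ := h5 (U.rsup a₁) b (U.rsup s) bs hbs ha₁bs
  obtain ⟨ax, hax, -⟩ := U.assoc₂ hxy (U.rsup_spec a₁)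
  exact ⟨x, hsymm hxb, ax, hax⟩

theorem C3_of_supplements_of_C5' (hsymm : ∀ {x y}, r x y → r y x)
    (hrsup : ∀ a b, r a b → r (U.rsup a) (U.rsup b))
    (hlsup : ∀ a b, r a b → r (U.lsup a) (U.lsup b)) (h5 : U.C5' r) : U.C3 r :=
  fun _ _ _ hab =>
    ⟨fun _ ha₁ => exists_rel_oplus_of_C5' hsymm hrsup h5 hab ha₁,
      fun _ hb₂ => exists_rel_oplus_of_C5' (U := U.op) hsymm hlsup h5.op hab hb₂⟩

end PEA

theorem stmt11 {P : Type*} (U : PEA P) (r : P → P → Prop)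
    (hw : U.toGPEA.IsWeakCong r) :
    U.toGPEA.C3 r ↔
      ((∀ a b : P, r a b → r (U.rsup a) (U.rsup b) ∧ r (U.lsup a) (U.lsup b)) ∧
        U.toGPEA.C5' r) := by
  constructor
  · intro h3
    exact ⟨fun a b hab => ⟨PEA.rsup_rel_of_C3 hw h3 hab, PEA.lsup_rel_of_C3 hw h3 hab⟩,
      PEA.C5'_of_C3 hw h3⟩
  · rintro ⟨hsup, h5⟩
    exact PEA.C3_of_supplements_of_C5' hw.1.symm
      (fun a b hab => (hsup a b hab).1) (fun a b hab => (hsup a b hab).2) h5
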